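/- Let Z ∈ R^{n×r} have full column rank (σ_min(Z) > 0), let ε ∈ (0, 2σ_min²(Z)/‖ZZᵀ‖_F), and let X ∈ R^{n×r} satisfy ‖XXᵀ − ZZᵀ‖_F ≤ ε‖ZZᵀ‖_F. Then ‖Zᵀ(I − XX†)Z‖_F² / ‖XXᵀ − ZZᵀ‖_F² ≤ ε / (2σ_min²(Z)/‖ZZᵀ‖_F − ε), provided XXᵀ ≠ ZZᵀ. -/
import Mathlib

open Matrix

noncomputable def frob {m n : Type*} [Fintype m] [Fintype n] (A : Matrix m n ℝ) : ℝ :=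
  Real.sqrt (∑ i, ∑ j, A i j ^ 2)

/-- The square of the smallest singular value: the minimum of `‖Z v‖²` over unit vectors `v`. -/
noncomputable def sminSq {m : Type*} [Fintype m] {r : ℕ} (Z : Matrix m (Fin r) ℝ) : ℝ :=
  sInf {t : ℝ | ∃ v : Fin r → ℝ, (∑ i, v i ^ 2) = 1 ∧ t = ∑ i, (Z.mulVec v) i ^ 2}

/-- The four Moore–Penrose conditions characterizing the pseudoinverse. -/
def IsMoorePenrose {n r : ℕ} (X : Matrix (Fin n) (Fin r) ℝ)
    (Xd : Matrix (Fin r) (Fin n) ℝ) : Prop :=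
  X * Xd * X = X ∧ Xd * X * Xd = Xd ∧ (X * Xd)ᵀ = X * Xd ∧ (Xd * X)ᵀ = Xd * X

noncomputable def tF {m k : Type*} [Fintype m] [Fintype k] (A : Matrix m k ℝ) : ℝ :=
  ∑ i, ∑ j, A i j ^ 2

lemma tF_nonneg {m k : Type*} [Fintype m] [Fintype k] (A : Matrix m k ℝ) : 0 ≤ tF A := by
  have : tF A = ∑ i, ∑ j, A i j ^ 2 := rfl
  rw [this]; positivity

lemma frob_sq {m k : Type*} [Fintype m] [Fintype k] (A : Matrix m k ℝ) :
    frob A ^ 2 = tF A :=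
  Real.sq_sqrt (by positivity)

lemma frob_nonneg {m k : Type*} [Fintype m] [Fintype k] (A : Matrix m k ℝ) : 0 ≤ frob A :=
  Real.sqrt_nonneg _

lemma tF_eq_trace {m k : Type*} [Fintype m] [Fintype k] (A : Matrix m k ℝ) :
    tF A = Matrix.trace (Aᵀ * A) := by
  unfold tF Matrix.trace
  rw [Finset.sum_comm]
  refine Finset.sum_congr rfl fun j _ => ?_
  simp [Matrix.mul_apply, Matrix.diag, sq]

lemma tF_neg {m k : Type*} [Fintype m] [Fintype k] (A : Matrix m k ℝ) : tF (-A) = tF A := by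
  unfold tF; simp

lemma tF_transpose {m k : Type*} [Fintype m] [Fintype k] (A : Matrix m k ℝ) :
    tF Aᵀ = tF A := by
  unfold tF; rw [Finset.sum_comm]; simp [Matrix.transpose_apply]

lemma tF_add_of_ortho {m k : Type*} [Fintype m] [Fintype k] (A C : Matrix m k ℝ)
    (h : Matrix.trace (Aᵀ * C) = 0) : tF (A + C) = tF A + tF C := by
  have h' : Matrix.trace (Cᵀ * A) = 0 := by
    rw [← Matrix.trace_transpose (Cᵀ * A), Matrix.transpose_mul, Matrix.transpose_transpose, h]
  rw [tF_eq_trace, tF_eq_trace, tF_eq_trace]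
  rw [Matrix.transpose_add, Matrix.add_mul, Matrix.mul_add, Matrix.mul_add, Matrix.trace_add,
    Matrix.trace_add, Matrix.trace_add, h, h']
  ring

lemma frob_pos_of_ne_zero {m k : Type*} [Fintype m] [Fintype k] {A : Matrix m k ℝ}
    (h : A ≠ 0) : 0 < frob A := by
  rcases (frob_nonneg A).lt_or_eq with h1 | h1
  · exact h1
  · exfalso
    apply h
    have h2 : (∑ i, ∑ j, A i j ^ 2) = 0 := by
      have h3 := (Real.sqrt_eq_zero (by positivity)).mp h1.symm
      exact h3
    ext i j
    have hij := (Finset.sum_eq_zero_iff_of_nonneg (fun i _ => by positivity)).1 h2 i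
      (Finset.mem_univ i)
    have := (Finset.sum_eq_zero_iff_of_nonneg (fun j _ => sq_nonneg _)).1 hij j
      (Finset.mem_univ j)
    simpa using pow_eq_zero_iff two_ne_zero |>.mp this

lemma sminSq_quad {m : Type*} [Fintype m] {r : ℕ} (Z : Matrix m (Fin r) ℝ)
    (v : Fin r → ℝ) :
    sminSq Z * (∑ j, v j ^ 2) ≤ ∑ i, (Z.mulVec v) i ^ 2 := by
  rcases eq_or_ne (∑ j, v j ^ 2) 0 with h | h
  · have hv : v = 0 := by
      funext j
      have := (Finset.sum_eq_zero_iff_of_nonneg (fun j _ => sq_nonneg (v j))).1 h j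
        (Finset.mem_univ j)
      simpa using pow_eq_zero_iff two_ne_zero |>.mp this
    rw [h, mul_zero]
    positivity
  · have hc : 0 < ∑ j, v j ^ 2 := lt_of_le_of_ne (by positivity) (Ne.symm h)
    set c := ∑ j, v j ^ 2 with hcdef
    have hsc : 0 < Real.sqrt c := Real.sqrt_pos.2 hc
    have hscsq : (Real.sqrt c)⁻¹ ^ 2 = c⁻¹ := by
      rw [inv_pow, Real.sq_sqrt hc.le]
    have hbdd : BddBelow {t : ℝ | ∃ w : Fin r → ℝ, (∑ i, w i ^ 2) = 1 ∧
        t = ∑ i, (Z.mulVec w) i ^ 2} := by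
      refine ⟨0, fun t ht => ?_⟩
      obtain ⟨w, _, rfl⟩ := ht
      positivity
    have hmem : (∑ i, (Z.mulVec ((Real.sqrt c)⁻¹ • v)) i ^ 2) ∈ {t : ℝ | ∃ w : Fin r → ℝ,
        (∑ i, w i ^ 2) = 1 ∧ t = ∑ i, (Z.mulVec w) i ^ 2} := by
      refine ⟨(Real.sqrt c)⁻¹ • v, ?_, rfl⟩
      simp only [Pi.smul_apply, smul_eq_mul, mul_pow]
      rw [← Finset.mul_sum, hscsq, ← hcdef, inv_mul_cancel₀ hc.ne']
    have hle := csInf_le hbdd hmem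
    have hval : (∑ i, (Z.mulVec ((Real.sqrt c)⁻¹ • v)) i ^ 2)
        = c⁻¹ * ∑ i, (Z.mulVec v) i ^ 2 := by
      rw [Matrix.mulVec_smul]
      simp only [Pi.smul_apply, smul_eq_mul, mul_pow]
      rw [← Finset.mul_sum, hscsq]
    rw [hval] at hle
    calc sminSq Z * c ≤ (c⁻¹ * ∑ i, (Z.mulVec v) i ^ 2) * c :=
          mul_le_mul_of_nonneg_right hle hc.le
      _ = ∑ i, (Z.mulVec v) i ^ 2 := by field_simp


lemma tF_mul_transpose_comm {m k : Type*} [Fintype m] [Fintype k] (B : Matrix m k ℝ) :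
    tF (Bᵀ * B) = tF (B * Bᵀ) := by
  rw [tF_eq_trace, tF_eq_trace, Matrix.transpose_mul, Matrix.transpose_transpose,
    Matrix.transpose_mul, Matrix.transpose_transpose]
  have h1 : (Bᵀ * B) * (Bᵀ * B) = Bᵀ * (B * (Bᵀ * B)) := by simp only [Matrix.mul_assoc]
  have h2 : (B * (Bᵀ * B)) * Bᵀ = (B * Bᵀ) * (B * Bᵀ) := by simp only [Matrix.mul_assoc]
  rw [h1, Matrix.trace_mul_comm, h2]

lemma frob_transpose_mul_le {m k : Type*} [Fintype m] [Fintype k] (B : Matrix m k ℝ) :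
    frob (Bᵀ * B) ≤ tF B := by
  have hdiag : ∀ j, (Bᵀ * B) j j = ∑ i, B i j ^ 2 := by
    intro j; simp [Matrix.mul_apply, sq]
  have hdnn : (0:ℝ) ≤ ∑ j, (Bᵀ * B) j j := by
    apply Finset.sum_nonneg; intro j _; rw [hdiag]; positivity
  have hCS : ∀ i j, (Bᵀ * B) i j ^ 2 ≤ (Bᵀ * B) i i * (Bᵀ * B) j j := by
    intro i j
    have h := Finset.sum_mul_sq_le_sq_mul_sq Finset.univ (fun k => B k i) (fun k => B k j)
    have he : (Bᵀ * B) i j = ∑ k, B k i * B k j := by simp [Matrix.mul_apply]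
    rw [he, hdiag, hdiag]
    exact h
  have hsum : (∑ i, ∑ j, (Bᵀ * B) i j ^ 2) ≤ (∑ j, (Bᵀ * B) j j) ^ 2 := by
    calc (∑ i, ∑ j, (Bᵀ * B) i j ^ 2)
        ≤ ∑ i, ∑ j, (Bᵀ * B) i i * (Bᵀ * B) j j := by
          apply Finset.sum_le_sum; intro i _
          apply Finset.sum_le_sum; intro j _
          exact hCS i j
      _ = (∑ i, (Bᵀ * B) i i) * (∑ j, (Bᵀ * B) j j) := by
          rw [Finset.sum_mul_sum]
      _ = (∑ j, (Bᵀ * B) j j) ^ 2 := by ring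
  have htr : tF B = ∑ j, (Bᵀ * B) j j := by
    rw [tF_eq_trace]; rfl
  rw [htr]
  calc frob (Bᵀ * B) = Real.sqrt (∑ i, ∑ j, (Bᵀ * B) i j ^ 2) := rfl
    _ ≤ Real.sqrt ((∑ j, (Bᵀ * B) j j) ^ 2) := Real.sqrt_le_sqrt hsum
    _ = ∑ j, (Bᵀ * B) j j := Real.sqrt_sq hdnn


lemma key_ineqs {n r : ℕ} (Z : Matrix (Fin n) (Fin r) ℝ)
    (Q E : Matrix (Fin n) (Fin n) ℝ) (hsm : 0 ≤ sminSq Z)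
    (hQQ : Q * Q = Q) (hQt : Qᵀ = Q) (hEt : Eᵀ = E)
    (hQE : Q * E = -(Q * Z * Zᵀ)) :
    sminSq Z * frob (Zᵀ * Q * Z) ≤ tF (Q * E) ∧
      2 * tF (Q * E) ≤ tF E + frob (Zᵀ * Q * Z) ^ 2 ∧
      frob (Zᵀ * Q * Z) ^ 2 ≤ tF E := by
  set P : Matrix (Fin n) (Fin n) ℝ := 1 - Q with hPdef
  have hQP : Q * P = 0 := by
    rw [hPdef, Matrix.mul_sub, Matrix.mul_one, hQQ, sub_self]
  have hPQ : P * Q = 0 := by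
    rw [hPdef, Matrix.sub_mul, Matrix.one_mul, hQQ, sub_self]
  have hPt : Pᵀ = P := by rw [hPdef, Matrix.transpose_sub, Matrix.transpose_one, hQt]
  have hQ_add_P : Q + P = 1 := by rw [hPdef]; abel
  have hB_t : (Q * Z)ᵀ = Zᵀ * Q := by rw [Matrix.transpose_mul, hQt]
  have hZQZ : Zᵀ * Q * Z = (Q * Z)ᵀ * (Q * Z) := by
    rw [hB_t]
    calc Zᵀ * Q * Z = Zᵀ * (Q * Q) * Z := by rw [hQQ]
      _ = (Zᵀ * Q) * (Q * Z) := by simp only [Matrix.mul_assoc]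
  -- cross terms vanish
  have cross1 : Matrix.trace ((Q * E * Q)ᵀ * (Q * E * P)) = 0 := by
    have ht : (Q * E * Q)ᵀ * (Q * E * P) = (Q * E * Q * Q * E) * P := by
      rw [Matrix.transpose_mul, Matrix.transpose_mul, hQt, hEt]
      simp only [Matrix.mul_assoc]
    have hz : P * (Q * E * Q * Q * E) = 0 := by
      calc P * (Q * E * Q * Q * E) = (P * Q) * (E * Q * Q * E) := by
            simp only [Matrix.mul_assoc]
        _ = 0 := by rw [hPQ, Matrix.zero_mul]
    rw [ht, Matrix.trace_mul_comm, hz, Matrix.trace_zero]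
  have cross2 : Matrix.trace ((Q * E)ᵀ * (P * E)) = 0 := by
    have ht : (Q * E)ᵀ * (P * E) = 0 := by
      rw [Matrix.transpose_mul, hQt, hEt]
      calc E * Q * (P * E) = E * ((Q * P) * E) := by simp only [Matrix.mul_assoc]
        _ = 0 := by rw [hQP, Matrix.zero_mul, Matrix.mul_zero]
    rw [ht, Matrix.trace_zero]
  have cross3 : Matrix.trace ((P * E * Q)ᵀ * (P * E * P)) = 0 := by
    have ht : (P * E * Q)ᵀ * (P * E * P) = (Q * E * P * P * E) * P := by
      rw [Matrix.transpose_mul, Matrix.transpose_mul, hQt, hEt, hPt]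
      simp only [Matrix.mul_assoc]
    have hz : P * (Q * E * P * P * E) = 0 := by
      calc P * (Q * E * P * P * E) = (P * Q) * (E * P * P * E) := by
            simp only [Matrix.mul_assoc]
        _ = 0 := by rw [hPQ, Matrix.zero_mul]
    rw [ht, Matrix.trace_mul_comm, hz, Matrix.trace_zero]
  -- splittings
  have hsplitE : tF E = tF (Q * E) + tF (P * E) := by
    calc tF E = tF (Q * E + P * E) := by
          rw [← Matrix.add_mul, hQ_add_P, Matrix.one_mul]
      _ = tF (Q * E) + tF (P * E) := tF_add_of_ortho _ _ cross2
  have hsplitQE : tF (Q * E) = tF (Q * E * Q) + tF (Q * E * P) := by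
    calc tF (Q * E) = tF (Q * E * Q + Q * E * P) := by
          rw [← Matrix.mul_add, hQ_add_P, Matrix.mul_one]
      _ = tF (Q * E * Q) + tF (Q * E * P) := tF_add_of_ortho _ _ cross1
  have hsplitPE : tF (P * E) = tF (P * E * Q) + tF (P * E * P) := by
    calc tF (P * E) = tF (P * E * Q + P * E * P) := by
          rw [← Matrix.mul_add, hQ_add_P, Matrix.mul_one]
      _ = tF (P * E * Q) + tF (P * E * P) := tF_add_of_ortho _ _ cross3
  have htrans : tF (P * E * Q) = tF (Q * E * P) := by
    have h : (Q * E * P)ᵀ = P * E * Q := by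
      rw [Matrix.transpose_mul, Matrix.transpose_mul, hQt, hEt, hPt]
      simp only [Matrix.mul_assoc]
    rw [← h, tF_transpose]
  have hQEQ : Q * E * Q = -((Q * Z) * (Q * Z)ᵀ) := by
    calc Q * E * Q = -(Q * Z * Zᵀ) * Q := by rw [hQE]
      _ = -((Q * Z) * ((Q * Z)ᵀ)) := by
          rw [hB_t, Matrix.neg_mul, Matrix.mul_assoc]
  have hsQEQ : frob (Zᵀ * Q * Z) ^ 2 = tF (Q * E * Q) := by
    rw [frob_sq, hZQZ, hQEQ, tF_neg, tF_mul_transpose_comm]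
  refine ⟨?_, ?_, ?_⟩
  · -- sminSq Z * frob (Zᵀ*Q*Z) ≤ tF (Q*E)
    have hentry : ∀ i l, (Q * Z * Zᵀ) i l = Z.mulVec (fun j => (Q * Z) i j) l := by
      intro i l
      simp [Matrix.mul_apply, Matrix.mulVec, dotProduct, Matrix.transpose_apply,
        mul_comm]
    have hQEval : tF (Q * E) = ∑ i, ∑ l, (Z.mulVec (fun j => (Q * Z) i j)) l ^ 2 := by
      rw [hQE, tF_neg]
      unfold tF
      refine Finset.sum_congr rfl fun i _ => Finset.sum_congr rfl fun l _ => ?_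
      rw [hentry]
    have hlow : sminSq Z * tF (Q * Z) ≤ tF (Q * E) := by
      rw [hQEval]
      have : tF (Q * Z) = ∑ i, ∑ j, (Q * Z) i j ^ 2 := rfl
      rw [this, Finset.mul_sum]
      apply Finset.sum_le_sum
      intro i _
      exact sminSq_quad Z (fun j => (Q * Z) i j)
    have hfr : frob (Zᵀ * Q * Z) ≤ tF (Q * Z) := by
      rw [hZQZ]
      exact frob_transpose_mul_le (Q * Z)
    calc sminSq Z * frob (Zᵀ * Q * Z) ≤ sminSq Z * tF (Q * Z) :=
          mul_le_mul_of_nonneg_left hfr hsm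
      _ ≤ tF (Q * E) := hlow
  · have h1 := tF_nonneg (P * E * P)
    linarith [hsplitE, hsplitQE, hsplitPE, htrans, hsQEQ]
  · have h1 := tF_nonneg (P * E * P)
    have h2 := tF_nonneg (Q * E * P)
    have h3 := tF_nonneg (P * E * Q)
    linarith [hsplitE, hsplitQE, hsplitPE, hsQEQ]

set_option maxHeartbeats 2000000 in
theorem sin_sq_bound {n r : ℕ} (Z X : Matrix (Fin n) (Fin r) ℝ)
    (hZ : 0 < sminSq Z) (ε : ℝ)
    (hε0 : 0 < ε) (hε1 : ε < 2 * sminSq Z / frob (Z * Zᵀ))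
    (hX : frob (X * Xᵀ - Z * Zᵀ) ≤ ε * frob (Z * Zᵀ))
    (hne : X * Xᵀ ≠ Z * Zᵀ)
    (Xd : Matrix (Fin r) (Fin n) ℝ) (hXd : IsMoorePenrose X Xd) :
    frob (Zᵀ * ((1 : Matrix (Fin n) (Fin n) ℝ) - X * Xd) * Z) ^ 2
        / frob (X * Xᵀ - Z * Zᵀ) ^ 2
      ≤ ε / (2 * sminSq Z / frob (Z * Zᵀ) - ε) := by
  obtain ⟨h1X, h2X, h3X, h4X⟩ := hXd
  set Q : Matrix (Fin n) (Fin n) ℝ := 1 - X * Xd with hQdef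
  set E : Matrix (Fin n) (Fin n) ℝ := X * Xᵀ - Z * Zᵀ with hEdef
  have hPP : (X * Xd) * (X * Xd) = X * Xd := by
    rw [← Matrix.mul_assoc, h1X]
  have hQQ : Q * Q = Q := by
    have gen : ∀ (P : Matrix (Fin n) (Fin n) ℝ), P * P = P → (1 - P) * (1 - P) = 1 - P := by
      intro P h
      rw [sub_mul, one_mul, mul_sub, mul_one, h]
      abel
    rw [hQdef]
    exact gen _ hPP
  have hQt : Qᵀ = Q := by
    rw [hQdef, Matrix.transpose_sub, Matrix.transpose_one, h3X]
  have hEt : Eᵀ = E := by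
    rw [hEdef, Matrix.transpose_sub, Matrix.transpose_mul, Matrix.transpose_mul,
      Matrix.transpose_transpose, Matrix.transpose_transpose]
  have hQX : Q * X = 0 := by
    rw [hQdef, Matrix.sub_mul, Matrix.one_mul, Matrix.mul_assoc, ← Matrix.mul_assoc, h1X,
      sub_self]
  have hQE : Q * E = -(Q * Z * Zᵀ) := by
    rw [hEdef, Matrix.mul_sub, ← Matrix.mul_assoc, hQX, Matrix.zero_mul, zero_sub,
      Matrix.mul_assoc]
  obtain ⟨k1, k2, k3⟩ := key_ineqs Z Q E hZ.le hQQ hQt hEt hQE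
  set σ := sminSq Z with hσdef
  set N := frob (Z * Zᵀ) with hNdef
  set D := frob E with hDdef
  set s := frob (Zᵀ * Q * Z) with hsdef
  clear_value Q E σ N D s
  have hN : 0 < N := by
    rcases (frob_nonneg (Z * Zᵀ)).lt_or_eq with h | h
    · rw [hNdef]; exact h
    · exfalso
      have hN0 : N = 0 := by rw [hNdef, ← h]
      rw [hN0, div_zero] at hε1
      linarith
  have hD : 0 < D := by
    rw [hDdef]
    apply frob_pos_of_ne_zero
    rw [hEdef]
    exact sub_ne_zero.2 hne
  have hD2 : D ^ 2 = tF E := by rw [hDdef]; exact frob_sq E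
  have hs0 : 0 ≤ s := by rw [hsdef]; exact frob_nonneg _
  have hεN : ε * N < 2 * σ := (lt_div_iff₀ hN).mp hε1
  have hden : 0 < 2 * σ / N - ε := sub_pos.2 hε1
  have hmain : 2 * σ * s ≤ D ^ 2 + s ^ 2 := by linarith
  have hsD : s ≤ D := by nlinarith [k3, hD2, hs0, hD.le, sq_nonneg (s - D), sq_nonneg (s + D)]
  have hDN : D ≤ ε * N := hX
  have key : s ^ 2 * (2 * σ - ε * N) ≤ ε * N * D ^ 2 := by
    nlinarith [mul_le_mul_of_nonneg_right hmain hs0,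
      mul_le_mul_of_nonneg_right hsD (by positivity : (0:ℝ) ≤ D ^ 2 + s ^ 2),
      mul_le_mul_of_nonneg_right hDN (by positivity : (0:ℝ) ≤ D ^ 2 + s ^ 2)]
  rw [div_le_div_iff₀ (pow_pos hD 2) hden]
  have hrw : 2 * σ / N - ε = (2 * σ - ε * N) / N := by
    field_simp
  rw [hrw, ← mul_div_assoc, div_le_iff₀ hN]
  nlinarith [key]
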